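/- If the sequence {M u_{[k−n,k]}}_{k=n}^{N−1} is K_u-PE of order 1 for some symmetric positive definite K_u ∈ ℝ^{p×p}, then for every initial state x_0 ∈ ℝ^n, the output sequence {y_k}_{k=0}^{N−1} generated by the system from x_0 under input {u_k}_{k=0}^{N−1} is K_y-PE of order 1 with K_y = K_u/(n+1), i.e., Σ_{k=0}^{N−1} y_k y_k^T ⪰ (1/(n+1)) K_u. -/

import Mathlib

/-!
By the annihilating relation `∑ d_j A^(n-j) = 0`, the free response `C A^i x_k` cancels in the
`d`-weighted combination of `n + 1` consecutive outputs, leaving exactly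
`M u_{[k,k+n]} = ∑_i d_{n-i} y_{k+i}`. Cauchy–Schwarz with `‖d‖ = 1` bounds `(xᵀ M u_{[k,k+n]})²`
by `∑_i (xᵀ y_{k+i})²`, and every `y_t` lies in at most `n + 1` windows, so
`∑_k (M u_{[k,k+n]}) (M u_{[k,k+n]})ᵀ ⪯ (n + 1) ∑_t y_t y_tᵀ`.
-/

open Matrix Finset

noncomputable def stateSeq {n m : ℕ} (A : Matrix (Fin n) (Fin n) ℝ) (B : Matrix (Fin n) (Fin m) ℝ)
    (x0 : Fin n → ℝ) (u : ℕ → Fin m → ℝ) : ℕ → Fin n → ℝ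
  | 0 => x0
  | k + 1 => A.mulVec (stateSeq A B x0 u k) + B.mulVec (u k)

/-- Output sequence `y_k = C x_k + D u_k` of the LTI system started at `x0` with input `u`. -/
noncomputable def outputSeq {n m p : ℕ} (A : Matrix (Fin n) (Fin n) ℝ) (B : Matrix (Fin n) (Fin m) ℝ)
    (C : Matrix (Fin p) (Fin n) ℝ) (D : Matrix (Fin p) (Fin m) ℝ)
    (x0 : Fin n → ℝ) (u : ℕ → Fin m → ℝ) (k : ℕ) : Fin p → ℝ :=
  C.mulVec (stateSeq A B x0 u k) + D.mulVec (u k)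

/-- Markov parameters: `Γ_0 = D`, `Γ_j = C A^(j-1) B` for `j ≥ 1`. -/
noncomputable def Markov {n m p : ℕ} (A : Matrix (Fin n) (Fin n) ℝ) (B : Matrix (Fin n) (Fin m) ℝ)
    (C : Matrix (Fin p) (Fin n) ℝ) (D : Matrix (Fin p) (Fin m) ℝ) : ℕ → Matrix (Fin p) (Fin m) ℝ
  | 0 => D
  | j + 1 => C * A ^ j * B

/-- The matrix `M = [M_n ⋯ M_1 M_0]` with `M_j = ∑_{q=0}^j d_{j-q} Γ_q`; the block at
block-column `i` (from the left, `i = 0,…,n`) is `M_{n-i}`. -/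
noncomputable def Mmat {n m p : ℕ} (A : Matrix (Fin n) (Fin n) ℝ) (B : Matrix (Fin n) (Fin m) ℝ)
    (C : Matrix (Fin p) (Fin n) ℝ) (D : Matrix (Fin p) (Fin m) ℝ) (d : ℕ → ℝ) :
    Matrix (Fin p) (Fin (n + 1) × Fin m) ℝ :=
  Matrix.of fun i jl =>
    (∑ q ∈ Finset.range ((n - (jl.1 : ℕ)) + 1),
      d ((n - (jl.1 : ℕ)) - q) • Markov A B C D q) i jl.2

section Gram

variable {ι α : Type*}

lemma posSemidef_sum_vecMulVec_self [Fintype ι] (s : Finset α) (v : α → ι → ℝ) :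
    (∑ k ∈ s, vecMulVec (v k) (v k)).PosSemidef :=
  posSemidef_sum s fun k _ => by simpa using posSemidef_vecMulVec_self_star (v k)

lemma dotProduct_sum_vecMulVec_self_mulVec [Fintype ι] (s : Finset α) (v : α → ι → ℝ)
    (x : ι → ℝ) :
    x ⬝ᵥ (∑ k ∈ s, vecMulVec (v k) (v k)) *ᵥ x = ∑ k ∈ s, (v k ⬝ᵥ x) ^ 2 := by
  rw [sum_mulVec, dotProduct_sum]
  refine sum_congr rfl fun k _ => ?_
  rw [vecMulVec_mulVec, op_smul_eq_smul, dotProduct_smul, smul_eq_mul, dotProduct_comm, sq]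

lemma posSemidef_sub_of_dotProduct_mulVec_le [Fintype ι] {S T : Matrix ι ι ℝ}
    (hS : S.IsHermitian) (hT : T.IsHermitian) (h : ∀ x, x ⬝ᵥ T *ᵥ x ≤ x ⬝ᵥ S *ᵥ x) :
    (S - T).PosSemidef :=
  .of_dotProduct_mulVec_nonneg (hS.sub hT) fun x => by
    simpa [sub_mulVec, dotProduct_sub] using h x

lemma posSemidef_sub_inv_smul {S T K : Matrix ι ι ℝ} {a : ℝ} (ha : 0 < a)
    (hTS : (a • S - T).PosSemidef) (hKT : (T - K).PosSemidef) : (S - a⁻¹ • K).PosSemidef := by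
  have h : S - a⁻¹ • K = a⁻¹ • (a • S - T) + a⁻¹ • (T - K) := by
    rw [← smul_add, sub_add_sub_cancel, smul_sub, smul_smul, inv_mul_cancel₀ ha.ne', one_smul]
  rw [h]
  exact (hTS.smul (inv_nonneg.2 ha.le)).add (hKT.smul (inv_nonneg.2 ha.le))

end Gram

lemma sum_range_sub_sum_range_add_le (n N : ℕ) {g : ℕ → ℝ} (hg : ∀ t, 0 ≤ g t) :
    ∑ k ∈ range (N - n), ∑ i ∈ range (n + 1), g (k + i) ≤ (n + 1) * ∑ t ∈ range N, g t := by
  rw [sum_comm]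
  calc _ ≤ ∑ _i ∈ range (n + 1), ∑ t ∈ range N, g t := sum_le_sum fun i hi => ?_
    _ = _ := by simp
  rw [← sum_image fun _ _ _ _ => Nat.add_right_cancel]
  refine sum_le_sum_of_subset_of_nonneg (fun t ht => ?_) fun t _ _ => hg t
  simp only [mem_image, mem_range] at ht hi ⊢
  omega

lemma sum_range_succ_reflect {M : Type*} [AddCommMonoid M] (f : ℕ → M) (n : ℕ) :
    ∑ i ∈ range (n + 1), f (n - i) = ∑ i ∈ range (n + 1), f i := by
  simpa using sum_range_reflect f (n + 1)

lemma posSemidef_smul_sum_vecMulVec_sub_of_eq_sum_smul {ι : Type*} [Fintype ι] (n N : ℕ)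
    (c : ℕ → ℝ) (v w : ℕ → ι → ℝ) (hv : ∀ k, v k = ∑ i ∈ range (n + 1), c i • w (k + i)) :
    (((∑ i ∈ range (n + 1), c i ^ 2) * (n + 1)) • ∑ t ∈ range N, vecMulVec (w t) (w t) -
      ∑ k ∈ range (N - n), vecMulVec (v k) (v k)).PosSemidef := by
  refine posSemidef_sub_of_dotProduct_mulVec_le
    (((posSemidef_sum_vecMulVec_self _ w).smul (by positivity)).isHermitian)
    (posSemidef_sum_vecMulVec_self _ v).isHermitian fun x => ?_
  have hcs : ∀ k, (v k ⬝ᵥ x) ^ 2 ≤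
      (∑ i ∈ range (n + 1), c i ^ 2) * ∑ i ∈ range (n + 1), (w (k + i) ⬝ᵥ x) ^ 2 := fun k => by
    simpa only [hv k, sum_dotProduct, smul_dotProduct, smul_eq_mul] using
      sum_mul_sq_le_sq_mul_sq _ c fun i => w (k + i) ⬝ᵥ x
  rw [smul_mulVec, dotProduct_smul, smul_eq_mul, dotProduct_sum_vecMulVec_self_mulVec,
    dotProduct_sum_vecMulVec_self_mulVec, mul_assoc]
  calc ∑ k ∈ range (N - n), (v k ⬝ᵥ x) ^ 2
      ≤ ∑ k ∈ range (N - n), (∑ i ∈ range (n + 1), c i ^ 2) *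
          ∑ i ∈ range (n + 1), (w (k + i) ⬝ᵥ x) ^ 2 := sum_le_sum fun k _ => hcs k
    _ ≤ _ := by
      rw [← mul_sum]
      exact mul_le_mul_of_nonneg_left
        (sum_range_sub_sum_range_add_le n N (g := fun t => (w t ⬝ᵥ x) ^ 2) fun t => sq_nonneg _)
        (sum_nonneg fun i _ => sq_nonneg _)

section LTI

variable {n m p : ℕ} (A : Matrix (Fin n) (Fin n) ℝ) (B : Matrix (Fin n) (Fin m) ℝ)
  (C : Matrix (Fin p) (Fin n) ℝ) (D : Matrix (Fin p) (Fin m) ℝ)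
  (x0 : Fin n → ℝ) (u : ℕ → Fin m → ℝ)

lemma stateSeq_add (k i : ℕ) :
    stateSeq A B x0 u (k + i) =
      A ^ i *ᵥ stateSeq A B x0 u k + ∑ s ∈ range i, (A ^ (i - 1 - s) * B) *ᵥ u (k + s) := by
  induction i with
  | zero => simp
  | succ i ih =>
    rw [← add_assoc, stateSeq, ih, mulVec_add, mulVec_mulVec, ← pow_succ', mulVec_sum,
      sum_range_succ, Nat.add_sub_cancel, Nat.sub_self, pow_zero, Matrix.one_mul, add_assoc]
    congr 2
    refine sum_congr rfl fun s hs => ?_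
    rw [mulVec_mulVec, ← Matrix.mul_assoc, ← pow_succ',
      show i - 1 - s + 1 = i - s by have := mem_range.1 hs; omega]

lemma outputSeq_add (k i : ℕ) :
    outputSeq A B C D x0 u (k + i) =
      (C * A ^ i) *ᵥ stateSeq A B x0 u k +
        ∑ s ∈ range (i + 1), Markov A B C D (i - s) *ᵥ u (k + s) := by
  rw [outputSeq, stateSeq_add, mulVec_add, mulVec_mulVec, mulVec_sum, sum_range_succ,
    Nat.sub_self, add_assoc]
  congr 2
  refine sum_congr rfl fun s hs => ?_
  obtain ⟨t, ht⟩ : ∃ t, i - s = t + 1 := ⟨i - s - 1, by have := mem_range.1 hs; omega⟩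
  rw [mulVec_mulVec, ← Matrix.mul_assoc, ht, show i - 1 - s = t by omega, Markov]

lemma Mmat_mulVec (d : ℕ → ℝ) (z : Fin (n + 1) → Fin m → ℝ) :
    Mmat A B C D d *ᵥ (fun il => z il.1 il.2) =
      ∑ s : Fin (n + 1),
        (∑ q ∈ range (n - s + 1), d (n - s - q) • Markov A B C D q) *ᵥ z s := by
  ext r
  simp only [mulVec, dotProduct, Mmat, of_apply, Fintype.sum_prod_type, Finset.sum_apply]

lemma sum_smul_pow_eq_zero_of_annihilating {d : ℕ → ℝ}
    (hCayley : ∑ j ∈ range (n + 1), d j • A ^ (n - j) = 0) :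
    ∑ i ∈ range (n + 1), d (n - i) • A ^ i = 0 := by
  rw [← hCayley, ← sum_range_succ_reflect]
  refine sum_congr rfl fun i hi => ?_
  rw [Nat.sub_sub_self (Nat.lt_succ_iff.1 (mem_range.1 hi))]

lemma Mmat_mulVec_eq_sum_smul_outputSeq {d : ℕ → ℝ}
    (hCayley : ∑ j ∈ range (n + 1), d j • A ^ (n - j) = 0) (k : ℕ) :
    Mmat A B C D d *ᵥ (fun il : Fin (n + 1) × Fin m => u (k + il.1) il.2) =
      ∑ i ∈ range (n + 1), d (n - i) • outputSeq A B C D x0 u (k + i) := by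
  have hfree : ∑ i ∈ range (n + 1), d (n - i) • ((C * A ^ i) *ᵥ stateSeq A B x0 u k) = 0 := by
    simp_rw [← smul_mulVec, ← sum_mulVec, ← Matrix.mul_smul, ← Matrix.mul_sum,
      sum_smul_pow_eq_zero_of_annihilating A hCayley, Matrix.mul_zero, zero_mulVec]
  simp_rw [outputSeq_add, smul_add, sum_add_distrib, hfree, zero_add, smul_sum]
  rw [Mmat_mulVec A B C D d fun s => u (k + s), Fin.sum_univ_eq_sum_range
    (fun s => (∑ q ∈ range (n - s + 1), d (n - s - q) • Markov A B C D q) *ᵥ u (k + s))]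
  simp_rw [range_eq_Ico, ← sum_Ico_Ico_comm, sum_mulVec]
  refine sum_congr rfl fun s hs => ?_
  rw [sum_Ico_eq_sum_range, sum_Ico_eq_sum_range,
    show n + 1 - s = n - s + 1 by simp only [mem_Ico] at hs; omega]
  refine sum_congr rfl fun q _ => ?_
  rw [smul_mulVec, Nat.add_sub_cancel_left, Nat.sub_sub, zero_add]

end LTI

theorem stmt_4_general {n m p : ℕ}
    (A : Matrix (Fin n) (Fin n) ℝ) (B : Matrix (Fin n) (Fin m) ℝ)
    (C : Matrix (Fin p) (Fin n) ℝ) (D : Matrix (Fin p) (Fin m) ℝ)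
    (d : ℕ → ℝ)
    (hdnorm : ∑ j ∈ Finset.range (n + 1), d j ^ 2 = 1)
    (hCayley : ∑ j ∈ Finset.range (n + 1), d j • A ^ (n - j) = 0)
    (N : ℕ) (u : ℕ → Fin m → ℝ)
    (Ku : Matrix (Fin p) (Fin p) ℝ)
    (hPE : ((∑ k ∈ Finset.range (N - n),
        vecMulVec
          ((Mmat A B C D d).mulVec fun il : Fin (n + 1) × Fin m => u (k + (il.1 : ℕ)) il.2)
          ((Mmat A B C D d).mulVec fun il : Fin (n + 1) × Fin m => u (k + (il.1 : ℕ)) il.2)) -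
        Ku).PosSemidef) :
    ∀ x0 : Fin n → ℝ,
      ((∑ k ∈ Finset.range N,
          vecMulVec (outputSeq A B C D x0 u k) (outputSeq A B C D x0 u k)) -
        ((1 : ℝ) / (n + 1)) • Ku).PosSemidef := by
  intro x0
  have hwindow := posSemidef_smul_sum_vecMulVec_sub_of_eq_sum_smul n N (fun i => d (n - i)) _
    (outputSeq A B C D x0 u) (Mmat_mulVec_eq_sum_smul_outputSeq A B C D x0 u hCayley)
  rw [(sum_range_succ_reflect (fun j => d j ^ 2) n).trans hdnorm, one_mul] at hwindow
  rw [one_div]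
  exact posSemidef_sub_inv_smul (by positivity) hwindow hPE

/-- if `{M u_{[k-n,k]}}_{k=n}^{N-1}` is `K_u`-PE of order 1, then for every initial
state the output is `K_y`-PE of order 1 with `K_y = K_u/(n+1)`. -/
theorem stmt_4 {n m p : ℕ} (hn : 0 < n) (hm : 0 < m) (hp : 0 < p)
    (A : Matrix (Fin n) (Fin n) ℝ) (B : Matrix (Fin n) (Fin m) ℝ)
    (C : Matrix (Fin p) (Fin n) ℝ) (D : Matrix (Fin p) (Fin m) ℝ)
    (d : ℕ → ℝ) (hd0 : d 0 ≠ 0)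
    (hdnorm : ∑ j ∈ Finset.range (n + 1), d j ^ 2 = 1)
    (hCayley : ∑ j ∈ Finset.range (n + 1), d j • A ^ (n - j) = 0)
    (N : ℕ) (hN : n < N) (u : ℕ → Fin m → ℝ)
    (Ku : Matrix (Fin p) (Fin p) ℝ) (hKu : Ku.PosDef)
    (hPE : ((∑ k ∈ Finset.range (N - n),
        vecMulVec
          ((Mmat A B C D d).mulVec fun il : Fin (n + 1) × Fin m => u (k + (il.1 : ℕ)) il.2)
          ((Mmat A B C D d).mulVec fun il : Fin (n + 1) × Fin m => u (k + (il.1 : ℕ)) il.2)) -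
        Ku).PosSemidef) :
    ∀ x0 : Fin n → ℝ,
      ((∑ k ∈ Finset.range N,
          vecMulVec (outputSeq A B C D x0 u k) (outputSeq A B C D x0 u k)) -
        ((1 : ℝ) / (n + 1)) • Ku).PosSemidef :=
  stmt_4_general A B C D d hdnorm hCayley N u Ku hPE
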